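/- arXiv:2405.03778 — 5 statements merged into one kernel-verified Lean document; each statement's English description precedes it below -/
import Mathlib

section
/- Let (Ω,d) be a Hadamard space, μ ∈ Ω, φ ∈ (0,1], and let X be a Borel random variable in Ω with P(X ≠ μ) > 0. Let ε be a random map from Ω to Ω, independent of X, satisfying the monotonicity condition: for all x, y, z ∈ Ω, d(x,z) < d(y,z) implies E[d(ε(x),z)^2] < E[d(ε(y),z)^2]. Assume all the expectations below are finite. Then E[d(ε(γ_μ^X(φ)), X)^2] < E[d(ε(μ), X)^2]. In particular, since d(γ_μ^x(φ), x) = (1−φ)·d(μ,x) for every x, the expected squared one-step distance of the GAR(1) process with concentration φ > 0 is strictly smaller than under independence (φ = 0). -/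
open MeasureTheory Metric

/-- The Non-Positive Curvature (NPC) midpoint inequality characterizing Hadamard spaces. -/
def NPCSpace (Ω : Type*) [MetricSpace Ω] : Prop :=
  ∀ x y : Ω, ∃ m : Ω, ∀ z : Ω,
    dist z m ^ 2 ≤ (1/2 : ℝ) * dist z x ^ 2 + (1/2 : ℝ) * dist z y ^ 2
      - (1/4 : ℝ) * dist x y ^ 2

/-- `γ : [0,1] → Ω` is a geodesic from `x` to `y`. -/
def IsGeodesicFrom {Ω : Type*} [MetricSpace Ω] (x y : Ω) (γ : ℝ → Ω) : Prop :=
  γ 0 = x ∧ γ 1 = y ∧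
    ∀ s ∈ Set.Icc (0:ℝ) 1, ∀ t ∈ Set.Icc (0:ℝ) 1,
      dist (γ s) (γ t) = |s - t| * dist x y

/-- in a Hadamard space with `φ ∈ (0,1]`, `X` Borel with `P(X ≠ μ) > 0`,
and a noise map `ε` independent of `X` (modelled on a separate probability space) satisfying
the monotonicity condition `d(x,z) < d(y,z) ⇒ E[d(ε(x),z)²] < E[d(ε(y),z)²]`, the expected
squared one-step distance under concentration `φ` is strictly smaller than under
independence: `E[d(ε(γ_μ^X(φ)), X)²] < E[d(ε(μ), X)²]`; moreover
`d(γ_μ^x(φ), x) = (1−φ)·d(μ,x)` for every `x`. -/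
theorem one_step_distance_decreases
    {Ω : Type*} [MetricSpace Ω] [CompleteSpace Ω] (hNPC : NPCSpace Ω)
    [MeasurableSpace Ω] [BorelSpace Ω]
    (μ : Ω) (φ : ℝ) (hφ : φ ∈ Set.Ioc (0:ℝ) 1)
    (G : Ω → Ω → ℝ → Ω) (hG : ∀ x y : Ω, IsGeodesicFrom x y (G x y))
    {A B : Type*} [MeasurableSpace A] [MeasurableSpace B]
    (P : Measure A) (Q : Measure B) [IsProbabilityMeasure P] [IsProbabilityMeasure Q]
    (X : A → Ω) (hX : Measurable X) (hXne : 0 < P {a | X a ≠ μ})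
    (ε : B → Ω → Ω) (hε : Measurable (Function.uncurry ε))
    (hmono : ∀ x y z : Ω, dist x z < dist y z →
      ∫ b, dist (ε b x) z ^ 2 ∂Q < ∫ b, dist (ε b y) z ^ 2 ∂Q)
    (hint1 : Integrable (fun p : A × B => dist (ε p.2 (G μ (X p.1) φ)) (X p.1) ^ 2) (P.prod Q))
    (hint2 : Integrable (fun p : A × B => dist (ε p.2 μ) (X p.1) ^ 2) (P.prod Q))
    (hint3 : ∀ x z : Ω, Integrable (fun b => dist (ε b x) z ^ 2) Q) :
    (∫ p, dist (ε p.2 (G μ (X p.1) φ)) (X p.1) ^ 2 ∂(P.prod Q)) <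
      (∫ p, dist (ε p.2 μ) (X p.1) ^ 2 ∂(P.prod Q)) ∧
    ∀ x : Ω, dist (G μ x φ) x = (1 - φ) * dist μ x := by

  obtain ⟨hφ0, hφ1⟩ := hφ
  have hgeo : ∀ x : Ω, dist (G μ x φ) x = (1 - φ) * dist μ x := by
    intro x
    obtain ⟨h0, h1, hd⟩ := hG μ x
    have := hd φ ⟨hφ0.le, hφ1⟩ 1 ⟨zero_le_one, le_refl 1⟩
    rw [h1] at this
    rw [this, abs_of_nonpos (by linarith)]
    ring
  refine ⟨?_, hgeo⟩
  have hGμμ : G μ μ φ = μ := by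
    obtain ⟨h0, h1, hd⟩ := hG μ μ
    have := hd φ ⟨hφ0.le, hφ1⟩ 0 ⟨le_refl 0, zero_le_one⟩
    rw [h0, dist_self, mul_zero, dist_eq_zero] at this
    exact this
  set f : A → ℝ := fun a => ∫ b, dist (ε b (G μ (X a) φ)) (X a) ^ 2 ∂Q with hfdef
  set g : A → ℝ := fun a => ∫ b, dist (ε b μ) (X a) ^ 2 ∂Q with hgdef
  have hf : Integrable f P := hint1.integral_prod_left
  have hg : Integrable g P := hint2.integral_prod_left
  have hle : ∀ a, f a ≤ g a := by
    intro a
    by_cases h : X a = μ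
    · simp only [hfdef, hgdef, h, hGμμ, le_refl]
    · refine (hmono _ _ _ ?_).le
      rw [hgeo (X a)]
      have hd : 0 < dist μ (X a) := dist_pos.mpr (Ne.symm h)
      nlinarith
  have hlt : ∀ a, X a ≠ μ → f a < g a := by
    intro a h
    refine hmono _ _ _ ?_
    rw [hgeo (X a)]
    have hd : 0 < dist μ (X a) := dist_pos.mpr (Ne.symm h)
    nlinarith
  rw [MeasureTheory.integral_prod _ hint1, MeasureTheory.integral_prod _ hint2]
  have hsub : Integrable (fun a => g a - f a) P := hg.sub hf
  have hpos : 0 < ∫ a, (g a - f a) ∂P := by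
    rw [MeasureTheory.integral_pos_iff_support_of_nonneg
      (fun a => sub_nonneg.mpr (hle a)) hsub]
    refine lt_of_lt_of_le hXne (measure_mono ?_)
    intro a ha
    exact ne_of_gt (sub_pos.mpr (hlt a ha))
  rw [MeasureTheory.integral_sub hg hf] at hpos
  linarith
end

section
/- Every Hadamard space satisfies Reshetnyak's quadruple comparison inequality: for all x1, x2, x3, x4 ∈ Ω, d(x1,x3)^2 + d(x2,x4)^2 ≤ d(x2,x3)^2 + d(x4,x1)^2 + 2·d(x1,x2)·d(x3,x4). -/
/-!
The NPC midpoint inequality self-improves, by repeated averaging, to the inequality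
`d(z, p)² ≤ (1 - t) d(z, a)² + t d(z, c)² - t (1 - t) d(a, c)²` for a point `p` at any dyadic
parameter `t` between `a` and `c`. Applying it to such points `p` between `x1, x3` and `q`
between `x2, x4` and expanding `0 ≤ d(p, q)²` gives
`t (1 - t) (d₁₃² + d₂₄² - d₂₃² - d₁₄²) ≤ (1 - t)² d₁₂² + t² d₃₄²`, which extends to all
`t ∈ [0, 1]` by continuity; `t = d₁₂ / (d₁₂ + d₃₄)` yields the claim.
-/

open Metric

open Filter Topology

/-- The NPC inequality at parameter `t`: `p` behaves like the point `γ t` of a geodesic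
`γ` from `a` to `c`. -/
def IsNPCInterpolant {Ω : Type*} [MetricSpace Ω] (a c : Ω) (t : ℝ) (p : Ω) : Prop :=
  ∀ z, dist z p ^ 2 ≤ (1 - t) * dist z a ^ 2 + t * dist z c ^ 2 - t * (1 - t) * dist a c ^ 2

namespace IsNPCInterpolant

variable {Ω : Type*} [MetricSpace Ω] {a b c d p q : Ω} {t u : ℝ}

theorem zero (a c : Ω) : IsNPCInterpolant a c 0 a := fun z => by simp

theorem one (a c : Ω) : IsNPCInterpolant a c 1 c := fun z => by simp

theorem dist_left_le (hp : IsNPCInterpolant a c t p) (ht : 0 ≤ t) :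
    dist a p ≤ t * dist a c := by
  have h := hp a
  rw [dist_self] at h
  exact pow_le_pow_iff_left₀ dist_nonneg (by positivity) two_ne_zero |>.mp (by nlinarith)

theorem dist_right_le (hp : IsNPCInterpolant a c t p) (ht : t ≤ 1) :
    dist p c ≤ (1 - t) * dist a c := by
  have h := hp c
  rw [dist_self, dist_comm c p, dist_comm c a] at h
  have : 0 ≤ 1 - t := by linarith
  exact pow_le_pow_iff_left₀ dist_nonneg (by positivity) two_ne_zero |>.mp (by nlinarith)

theorem mul_dist_le_dist (hp : IsNPCInterpolant a c t p) (hq : IsNPCInterpolant a c u q)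
    (ht : 0 ≤ t) (hu : u ≤ 1) : (u - t) * dist a c ≤ dist p q := by
  have := dist_triangle4 a p q c
  linarith [hp.dist_left_le ht, hq.dist_right_le hu]

theorem exists_midpoint (hNPC : NPCSpace Ω) (hp : IsNPCInterpolant a c t p)
    (hq : IsNPCInterpolant a c u q) (ht : 0 ≤ t) (htu : t ≤ u) (hu : u ≤ 1) :
    ∃ m, IsNPCInterpolant a c ((t + u) / 2) m := by
  obtain ⟨m, hm⟩ := hNPC p q
  have hpq : ((u - t) * dist a c) ^ 2 ≤ dist p q ^ 2 :=
    pow_le_pow_left₀ (by nlinarith [dist_nonneg (x := a) (y := c)])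
      (hp.mul_dist_le_dist hq ht hu) 2
  refine ⟨m, fun z => ?_⟩
  -- averaging `t (1 - t)` and `u (1 - u)` falls short of `v (1 - v)`, `v = (t + u) / 2`,
  -- by exactly `(u - t)² / 4`, which the term `-d(p, q)² / 4` of the NPC inequality supplies
  linear_combination hm z + (1 / 2 : ℝ) * hp z + (1 / 2 : ℝ) * hq z + (1 / 4 : ℝ) * hpq

theorem exists_dyadic (hNPC : NPCSpace Ω) (a c : Ω) :
    ∀ n k : ℕ, k ≤ 2 ^ n → ∃ p, IsNPCInterpolant a c (k / 2 ^ n) p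
  | 0, k, hk => by
    interval_cases k
    · exact ⟨a, by simpa using zero a c⟩
    · exact ⟨c, by simpa using one a c⟩
  | n + 1, k, hk => by
    -- `k / 2 ^ (n + 1)` is the average of `⌊k / 2⌋ / 2 ^ n` and `⌈k / 2⌉ / 2 ^ n`
    obtain ⟨p, hp⟩ := exists_dyadic hNPC a c n (k / 2) (by omega)
    obtain ⟨q, hq⟩ := exists_dyadic hNPC a c n ((k + 1) / 2) (by omega)
    have hsum : ((k / 2 : ℕ) : ℝ) + ((k + 1) / 2 : ℕ) = k := by
      norm_cast; omega
    have hmono : ((k / 2 : ℕ) : ℝ) ≤ ((k + 1) / 2 : ℕ) := by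
      exact_mod_cast Nat.div_le_div_right (Nat.le_succ k)
    have hle : (((k + 1) / 2 : ℕ) : ℝ) ≤ 2 ^ n := by
      exact_mod_cast (show (k + 1) / 2 ≤ 2 ^ n by omega)
    obtain ⟨m, hm⟩ := hp.exists_midpoint hNPC hq (by positivity)
      (div_le_div_of_nonneg_right hmono (by positivity))
      (div_le_one_of_le₀ hle (by positivity))
    refine ⟨m, ?_⟩
    convert hm using 1
    rw [← add_div, hsum, pow_succ]
    ring

theorem quadruple_comparison (hp : IsNPCInterpolant a c t p) (hq : IsNPCInterpolant b d t q)
    (ht₀ : 0 ≤ t) (ht₁ : t ≤ 1) :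
    t * (1 - t) * (dist a c ^ 2 + dist b d ^ 2 - dist b c ^ 2 - dist a d ^ 2) ≤
      (1 - t) ^ 2 * dist a b ^ 2 + t ^ 2 * dist c d ^ 2 := by
  have h₁ := mul_le_mul_of_nonneg_left (hp b) (sub_nonneg.mpr ht₁)
  have h₂ := mul_le_mul_of_nonneg_left (hp d) ht₀
  have h₀ := hq p
  rw [dist_comm b a] at h₁
  rw [dist_comm d a, dist_comm d c] at h₂
  rw [dist_comm p b, dist_comm p d] at h₀
  linear_combination h₀ + h₁ + h₂ + sq_nonneg (dist p q)

end IsNPCInterpolant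

theorem tendsto_dyadic_floor {t : ℝ} (ht : 0 ≤ t) :
    Tendsto (fun n : ℕ => (⌊t * 2 ^ n⌋₊ : ℝ) / 2 ^ n) atTop (𝓝 t) :=
  (tendsto_nat_floor_mul_div_atTop ht).comp
    (tendsto_pow_atTop_atTop_of_one_lt one_lt_two)

theorem NPCSpace.weighted_quadruple_comparison {Ω : Type*} [MetricSpace Ω]
    (hNPC : NPCSpace Ω) (a b c d : Ω) {t : ℝ} (ht₀ : 0 ≤ t) (ht₁ : t ≤ 1) :
    t * (1 - t) * (dist a c ^ 2 + dist b d ^ 2 - dist b c ^ 2 - dist a d ^ 2) ≤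
      (1 - t) ^ 2 * dist a b ^ 2 + t ^ 2 * dist c d ^ 2 := by
  let f : ℝ → ℝ := fun s => (1 - s) ^ 2 * dist a b ^ 2 + s ^ 2 * dist c d ^ 2 -
    s * (1 - s) * (dist a c ^ 2 + dist b d ^ 2 - dist b c ^ 2 - dist a d ^ 2)
  have hf : Continuous f := by fun_prop
  have hdyadic (n : ℕ) : 0 ≤ f (⌊t * 2 ^ n⌋₊ / 2 ^ n) := by
    have hk : ⌊t * 2 ^ n⌋₊ ≤ 2 ^ n :=
      Nat.floor_le_of_le (by exact_mod_cast mul_le_of_le_one_left (by positivity) ht₁)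
    obtain ⟨p, hp⟩ := IsNPCInterpolant.exists_dyadic hNPC a c n _ hk
    obtain ⟨q, hq⟩ := IsNPCInterpolant.exists_dyadic hNPC b d n _ hk
    exact sub_nonneg.mpr <| hp.quadruple_comparison hq (by positivity)
      (div_le_one_of_le₀ (by exact_mod_cast hk) (by positivity))
  exact sub_nonneg.mp (ge_of_tendsto' ((hf.tendsto t).comp (tendsto_dyadic_floor ht₀)) hdyadic)

theorem reshetnyak_quadruple_comparison_general
    {Ω : Type*} [MetricSpace Ω] (hNPC : NPCSpace Ω)
    (x1 x2 x3 x4 : Ω) :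
    dist x1 x3 ^ 2 + dist x2 x4 ^ 2 ≤
      dist x2 x3 ^ 2 + dist x4 x1 ^ 2 + 2 * dist x1 x2 * dist x3 x4 := by
  rcases eq_or_ne x1 x2 with rfl | h12
  · simp [dist_comm]
  rcases eq_or_ne x3 x4 with rfl | h34
  · simp [dist_comm, add_comm]
  set P := dist x1 x2
  set L := dist x3 x4
  have hP : 0 < P := dist_pos.mpr h12
  have hL : 0 < L := dist_pos.mpr h34
  have key := hNPC.weighted_quadruple_comparison x1 x2 x3 x4 (t := P / (P + L))
    (by positivity) (div_le_one_of_le₀ (by linarith) (by positivity))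
  rw [show 1 - P / (P + L) = L / (P + L) by field_simp; ring] at key
  field_simp at key
  rw [dist_comm x4 x1]
  nlinarith [mul_pos hP hL]

/-- Reshetnyak's quadruple comparison: every Hadamard space
(complete metric space satisfying the NPC inequality) satisfies
`d(x1,x3)^2 + d(x2,x4)^2 ≤ d(x2,x3)^2 + d(x4,x1)^2 + 2 d(x1,x2) d(x3,x4)`. -/
theorem reshetnyak_quadruple_comparison
    {Ω : Type*} [MetricSpace Ω] [CompleteSpace Ω] (hNPC : NPCSpace Ω)
    (x1 x2 x3 x4 : Ω) :
    dist x1 x3 ^ 2 + dist x2 x4 ^ 2 ≤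
      dist x2 x3 ^ 2 + dist x4 x1 ^ 2 + 2 * dist x1 x2 * dist x3 x4 :=
  reshetnyak_quadruple_comparison_general hNPC x1 x2 x3 x4
end

section
/- Let (Ω,d) be a Hadamard space and X a Borel random variable in Ω with E[d(X,z)^2] < ∞ for some z ∈ Ω, and let μ be the Fréchet mean of X (the minimizer of ω ↦ E[d(X,ω)^2]). Then the variance inequality holds: for every ω ∈ Ω, E[d(X,ω)^2] ≥ E[d(X,μ)^2] + d(ω,μ)^2. In particular the Fréchet mean is unique. -/
open MeasureTheory Metric

/-- variance inequality: in a Hadamard space, if `μ` is a Fréchet mean of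
a Borel random variable `X` with `E[d(X,z)²] < ∞` for some `z`, then for every `ω`,
`E[d(X,ω)²] ≥ E[d(X,μ)²] + d(ω,μ)²`; in particular the Fréchet mean is unique. -/
theorem variance_inequality
    {Ω : Type*} [MetricSpace Ω] [CompleteSpace Ω] (hNPC : NPCSpace Ω)
    [MeasurableSpace Ω] [BorelSpace Ω]
    {A : Type*} [MeasurableSpace A] (P : Measure A) [IsProbabilityMeasure P]
    (X : A → Ω) (hX : Measurable X)
    (hL2 : ∃ z : Ω, Integrable (fun a => dist (X a) z ^ 2) P)
    (μ : Ω) (hμ : ∀ ω : Ω, ∫ a, dist (X a) μ ^ 2 ∂P ≤ ∫ a, dist (X a) ω ^ 2 ∂P) :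
    (∀ ω : Ω, ∫ a, dist (X a) μ ^ 2 ∂P + dist ω μ ^ 2 ≤ ∫ a, dist (X a) ω ^ 2 ∂P) ∧
    (∀ m : Ω, (∀ ω : Ω, ∫ a, dist (X a) m ^ 2 ∂P ≤ ∫ a, dist (X a) ω ^ 2 ∂P) → m = μ) := by
  obtain ⟨z, hz⟩ := hL2
  have hmeas : ∀ ω : Ω, AEStronglyMeasurable (fun a => dist (X a) ω ^ 2) P := by
    intro ω
    have : Measurable fun a => dist (X a) ω :=
      (Continuous.measurable (continuous_id.dist continuous_const)).comp hX
    exact (this.pow_const 2).aestronglyMeasurable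
  have hint : ∀ ω : Ω, Integrable (fun a => dist (X a) ω ^ 2) P := by
    intro ω
    refine Integrable.mono' ((hz.const_mul 2).add (integrable_const (2 * dist z ω ^ 2)))
      (hmeas ω) ?_
    filter_upwards with a
    show ‖dist (X a) ω ^ 2‖ ≤ 2 * dist (X a) z ^ 2 + 2 * dist z ω ^ 2
    have h1 := dist_triangle (X a) z ω
    have h2 := dist_nonneg (x := X a) (y := z)
    have h3 := dist_nonneg (x := z) (y := ω)
    have h4 := dist_nonneg (x := X a) (y := ω)
    rw [Real.norm_eq_abs, abs_of_nonneg (by positivity)]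
    nlinarith [sq_nonneg (dist (X a) z - dist z ω)]
  -- step inequality: for any n, (1 - (1/2)^n) * dist ω μ ^ 2 + ∫ dμ² ≤ ∫ dω²
  have key : ∀ n : ℕ, ∀ ω : Ω,
      (1 - (1/2 : ℝ)^n) * dist ω μ ^ 2 + ∫ a, dist (X a) μ ^ 2 ∂P
        ≤ ∫ a, dist (X a) ω ^ 2 ∂P := by
    intro n
    induction n with
    | zero => intro ω; simpa using hμ ω
    | succ n ih =>
      intro ω
      obtain ⟨m, hm⟩ := hNPC ω μ
      -- integrated NPC inequality
      have hIm : ∫ a, dist (X a) m ^ 2 ∂P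
          ≤ (1/2) * (∫ a, dist (X a) ω ^ 2 ∂P) + (1/2) * (∫ a, dist (X a) μ ^ 2 ∂P)
            - (1/4) * dist ω μ ^ 2 := by
        have h1 : ∫ a, dist (X a) m ^ 2 ∂P
            ≤ ∫ a, ((1/2 : ℝ) * dist (X a) ω ^ 2 + (1/2) * dist (X a) μ ^ 2
              - (1/4) * dist ω μ ^ 2) ∂P := by
          refine integral_mono (hint m) ?_ (fun a => hm (X a))
          exact (((hint ω).const_mul _).add ((hint μ).const_mul _)).sub (integrable_const _)
        have h2a : Integrable (fun a => (1/2 : ℝ) * dist (X a) ω ^ 2) P :=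
          (hint ω).const_mul _
        have h2b : Integrable (fun a => (1/2 : ℝ) * dist (X a) μ ^ 2) P :=
          (hint μ).const_mul _
        have hfint : Integrable
            (fun a => (1/2 : ℝ) * dist (X a) ω ^ 2 + (1/2) * dist (X a) μ ^ 2) P :=
          h2a.add h2b
        have h2 : ∫ a, ((1/2 : ℝ) * dist (X a) ω ^ 2 + (1/2) * dist (X a) μ ^ 2
              - (1/4) * dist ω μ ^ 2) ∂P
            = (1/2) * (∫ a, dist (X a) ω ^ 2 ∂P) + (1/2) * (∫ a, dist (X a) μ ^ 2 ∂P)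
              - (1/4) * dist ω μ ^ 2 := by
          rw [integral_sub hfint (integrable_const _),
            integral_add h2a h2b,
            integral_const_mul, integral_const_mul, integral_const]
          simp
        linarith [h1, h2.le, h2.ge]
      -- geometric facts: dist ω m ≤ dist ω μ / 2, hence dist m μ ≥ dist ω μ / 2
      have hωm : dist ω m ^ 2 ≤ (1/4) * dist ω μ ^ 2 := by
        have := hm ω
        simp only [dist_self] at this
        nlinarith [this]
      have hmμ : dist ω μ / 2 ≤ dist m μ := by
        have ht := dist_triangle ω m μ
        have h0 : dist ω m ≤ dist ω μ / 2 := by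
          have := dist_nonneg (x := ω) (y := m)
          have := dist_nonneg (x := ω) (y := μ)
          nlinarith [hωm]
        linarith
      have ihm := ih m
      have hpow : (0:ℝ) ≤ 1 - (1/2 : ℝ)^n := by
        have : (1/2 : ℝ)^n ≤ 1 := pow_le_one₀ (by norm_num) (by norm_num)
        linarith
      have hsq : (dist ω μ / 2) ^ 2 ≤ dist m μ ^ 2 := by
        have := dist_nonneg (x := ω) (y := μ)
        nlinarith [hmμ]
      have hImμ := hμ m
      have hc : (1/2 : ℝ)^(n+1) = (1/2 : ℝ)^n * (1/2) := pow_succ _ _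
      have hD : (dist ω μ / 2) ^ 2 = dist ω μ ^ 2 / 4 := by ring
      nlinarith [mul_le_mul_of_nonneg_left hsq hpow, hc, hD]
  have main : ∀ ω : Ω, ∫ a, dist (X a) μ ^ 2 ∂P + dist ω μ ^ 2 ≤ ∫ a, dist (X a) ω ^ 2 ∂P := by
    intro ω
    have htend : Filter.Tendsto
        (fun n : ℕ => (1 - (1/2 : ℝ)^n) * dist ω μ ^ 2 + ∫ a, dist (X a) μ ^ 2 ∂P)
        Filter.atTop (nhds (dist ω μ ^ 2 + ∫ a, dist (X a) μ ^ 2 ∂P)) := by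
      have h0 : Filter.Tendsto (fun n : ℕ => (1/2 : ℝ)^n) Filter.atTop (nhds 0) :=
        tendsto_pow_atTop_nhds_zero_of_lt_one (by norm_num) (by norm_num)
      have := (((tendsto_const_nhds (x := (1:ℝ))).sub h0).mul_const (dist ω μ ^ 2)).add_const
        (∫ a, dist (X a) μ ^ 2 ∂P)
      simpa using this
    have := le_of_tendsto htend (Filter.Eventually.of_forall fun n => key n ω)
    linarith
  refine ⟨main, fun m hmin => ?_⟩
  have h1 := main m
  have h2 := hmin μ
  have : dist m μ ^ 2 ≤ 0 := by linarith
  have : dist m μ = 0 := by nlinarith [dist_nonneg (x := m) (y := μ)]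
  exact dist_eq_zero.mp this
end

section
/- Let (Ω,d) be a Hadamard space and X a Borel random variable in Ω with E[d(X,z)] < ∞ for some z ∈ Ω. Then for each z ∈ Ω the function ω ↦ E[d(X,ω)^2 − d(X,z)^2] is well defined (the integrand is integrable for every ω), continuous and uniformly convex, and it has a unique minimizer in Ω; moreover this minimizer does not depend on the choice of z. Consequently every L^1 random variable in a Hadamard space has a well-defined unique Fréchet mean. -/
/-!
Integrating the NPC inequality shows that `F_z(ω) = E[d(X,ω)² − d(X,z)²]` inherits it: for all
`u, v` there is `m` with `F_z m ≤ ½F_z u + ½F_z v − ¼d(u,v)²`; likewise `F_z` is convex along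
geodesics with modulus `1`. Since `|d(X,ω)² − d(X,z)²| ≤ d(ω,z)(2d(X,z) + d(ω,z))`, `F_z` is
finite and, by dominated convergence, continuous; it is bounded below by `−(E d(X,z))²`. The
midpoint inequality gives `d(u,v)² ≤ 2(F u − inf F) + 2(F v − inf F)`, so minimizing sequences
are Cauchy and converge to the unique minimizer. Changing `z` adds a constant to `F_z`.
-/

open MeasureTheory Metric

open Set Filter Topology

theorem nonpos_of_midpoint_convex_of_continuousOn_Icc {g : ℝ → ℝ}
    (hg : ContinuousOn g (Icc 0 1))
    (hmid : ∀ s ∈ Icc (0:ℝ) 1, ∀ t ∈ Icc (0:ℝ) 1, g ((s + t) / 2) ≤ (g s + g t) / 2)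
    (h0 : g 0 ≤ 0) (h1 : g 1 ≤ 0) {t : ℝ} (ht : t ∈ Icc (0:ℝ) 1) : g t ≤ 0 := by
  obtain ⟨t₀, ht₀, hmax⟩ := isCompact_Icc.exists_isMaxOn (nonempty_Icc.2 zero_le_one) hg
  suffices g t₀ ≤ 0 from (hmax ht).trans this
  -- `t₀` is the midpoint of an endpoint and a point of `[0,1]` where `g ≤ g t₀`.
  rcases le_total t₀ (1 / 2) with h | h
  · have h2t : 2 * t₀ ∈ Icc (0:ℝ) 1 := ⟨by linarith [ht₀.1], by linarith⟩
    have := hmid 0 (left_mem_Icc.2 zero_le_one) _ h2t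
    have hle : g (2 * t₀) ≤ g t₀ := hmax h2t
    rw [show (0 + 2 * t₀) / 2 = t₀ by ring] at this
    linarith
  · have h2t : 2 * t₀ - 1 ∈ Icc (0:ℝ) 1 := ⟨by linarith, by linarith [ht₀.2]⟩
    have := hmid _ h2t 1 (right_mem_Icc.2 zero_le_one)
    have hle : g (2 * t₀ - 1) ≤ g t₀ := hmax h2t
    rw [show (2 * t₀ - 1 + 1) / 2 = t₀ by ring] at this
    linarith

section Geodesic

variable {Ω : Type*} [MetricSpace Ω]

theorem abs_dist_sq_sub_dist_sq_le (p ω z : Ω) :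
    |dist p ω ^ 2 - dist p z ^ 2| ≤ dist ω z * (2 * dist p z + dist ω z) := by
  have h := abs_le.1 (abs_dist_sub_le ω z p)
  rw [dist_comm ω p, dist_comm z p] at h
  have hω := dist_nonneg (x := p) (y := ω)
  have hz := dist_nonneg (x := p) (y := z)
  rw [abs_le]
  constructor <;> nlinarith

theorem dist_sq_sub_mul_le_dist_sq_sub_dist_sq (p ω z : Ω) :
    dist z ω ^ 2 - 2 * dist z ω * dist p z ≤ dist p ω ^ 2 - dist p z ^ 2 := by
  have h := abs_le.1 (abs_dist_sub_le ω p z)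
  rw [dist_comm ω z, dist_comm ω p] at h
  nlinarith [dist_nonneg (x := p) (y := ω)]

theorem IsGeodesicFrom.continuousOn {x y : Ω} {γ : ℝ → Ω} (hγ : IsGeodesicFrom x y γ) :
    ContinuousOn γ (Icc 0 1) :=
  (LipschitzOnWith.of_dist_le_mul (K := ⟨dist x y, dist_nonneg⟩) fun s hs t ht => by
    rw [hγ.2.2 s hs t ht, Real.dist_eq, mul_comm]; rfl).continuousOn

theorem NPCSpace.dist_sq_le_of_dist_eq_half (hNPC : NPCSpace Ω) {x y p : Ω}
    (hx : dist p x = dist x y / 2) (hy : dist p y = dist x y / 2) (z : Ω) :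
    dist z p ^ 2 ≤ 1 / 2 * dist z x ^ 2 + 1 / 2 * dist z y ^ 2 - 1 / 4 * dist x y ^ 2 := by
  obtain ⟨m, hm⟩ := hNPC x y
  have hpm : p = m := by
    have := hm p
    rw [hx, hy] at this
    exact dist_le_zero.1 (by nlinarith [dist_nonneg (x := p) (y := m)])
  exact hpm ▸ hm z

theorem NPCSpace.dist_sq_geodesic_midpoint_le (hNPC : NPCSpace Ω) {x y : Ω} {γ : ℝ → Ω}
    (hγ : IsGeodesicFrom x y γ) {s t : ℝ} (hs : s ∈ Icc (0:ℝ) 1) (ht : t ∈ Icc (0:ℝ) 1)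
    (z : Ω) :
    dist z (γ ((s + t) / 2)) ^ 2 ≤ 1 / 2 * dist z (γ s) ^ 2 + 1 / 2 * dist z (γ t) ^ 2
      - 1 / 4 * ((s - t) ^ 2 * dist x y ^ 2) := by
  have hu : (s + t) / 2 ∈ Icc (0:ℝ) 1 := ⟨by linarith [hs.1, ht.1], by linarith [hs.2, ht.2]⟩
  have hst := hγ.2.2 s hs t ht
  have hx : dist (γ ((s + t) / 2)) (γ s) = dist (γ s) (γ t) / 2 := by
    rw [hγ.2.2 _ hu s hs, hst, show (s + t) / 2 - s = (t - s) / 2 by ring, abs_div, abs_two,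
      abs_sub_comm]
    ring
  have hy : dist (γ ((s + t) / 2)) (γ t) = dist (γ s) (γ t) / 2 := by
    rw [hγ.2.2 _ hu t ht, hst, show (s + t) / 2 - t = (s - t) / 2 by ring, abs_div, abs_two]
    ring
  have := hNPC.dist_sq_le_of_dist_eq_half hx hy z
  rwa [hst, mul_pow, sq_abs] at this

theorem NPCSpace.dist_sq_geodesic_le (hNPC : NPCSpace Ω) {x y : Ω} {γ : ℝ → Ω}
    (hγ : IsGeodesicFrom x y γ) (z : Ω) {t : ℝ} (ht : t ∈ Icc (0:ℝ) 1) :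
    dist z (γ t) ^ 2 ≤ (1 - t) * dist z x ^ 2 + t * dist z y ^ 2 - t * (1 - t) * dist x y ^ 2 := by
  -- The defect `g` of the claimed inequality is midpoint convex and vanishes at `0` and `1`.
  let g : ℝ → ℝ := fun r => dist z (γ r) ^ 2 -
    ((1 - r) * dist z x ^ 2 + r * dist z y ^ 2 - r * (1 - r) * dist x y ^ 2)
  have hg : ContinuousOn g (Icc 0 1) :=
    (((continuous_const.dist continuous_id).comp_continuousOn hγ.continuousOn).pow 2).sub
      (by fun_prop)
  have hmid : ∀ s ∈ Icc (0:ℝ) 1, ∀ r ∈ Icc (0:ℝ) 1, g ((s + r) / 2) ≤ (g s + g r) / 2 :=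
    fun s hs r hr => by
      have := hNPC.dist_sq_geodesic_midpoint_le hγ hs hr z
      simp only [g]
      nlinarith
  have h0 : g 0 ≤ 0 := by simp [g, hγ.1]
  have h1 : g 1 ≤ 0 := by simp [g, hγ.2.1]
  have := nonpos_of_midpoint_convex_of_continuousOn_Icc hg hmid h0 h1 ht
  simp only [g] at this
  linarith

end Geodesic

section Minimizer

variable {Ω : Type*} [MetricSpace Ω] {F : Ω → ℝ}

theorem dist_sq_le_of_midpoint_le {I : ℝ} (hI : ∀ ω, I ≤ F ω)
    (hmid : ∀ u v, ∃ m, F m ≤ 1 / 2 * F u + 1 / 2 * F v - 1 / 4 * dist u v ^ 2) (u v : Ω) :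
    dist u v ^ 2 ≤ 2 * (F u - I) + 2 * (F v - I) := by
  obtain ⟨m, hm⟩ := hmid u v
  linarith [hI m]

theorem existsUnique_forall_le_of_midpoint_le [CompleteSpace Ω] [Nonempty Ω]
    (hF : LowerSemicontinuous F) (hbdd : BddBelow (range F))
    (hmid : ∀ u v, ∃ m, F m ≤ 1 / 2 * F u + 1 / 2 * F v - 1 / 4 * dist u v ^ 2) :
    ∃! m, ∀ ω, F m ≤ F ω := by
  set I := ⨅ ω, F ω
  have hI : ∀ ω, I ≤ F ω := ciInf_le hbdd
  let δ : ℕ → ℝ := fun n => 1 / (n + 1)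
  have hδ : Tendsto δ atTop (𝓝 0) := tendsto_one_div_add_atTop_nhds_zero_nat
  have hu : ∀ n, ∃ ω, F ω < I + δ n ^ 2 / 4 := fun n =>
    exists_lt_of_ciInf_lt (lt_add_of_pos_right I (by positivity))
  choose u hu using hu
  have hcauchy : CauchySeq u := by
    refine cauchySeq_of_le_tendsto_0 δ (fun n k N hn hk => ?_) hδ
    have hδn : δ n ≤ δ N := Nat.one_div_le_one_div hn
    have hδk : δ k ≤ δ N := Nat.one_div_le_one_div hk
    have := dist_sq_le_of_midpoint_le hI hmid (u n) (u k)
    nlinarith [hu n, hu k, dist_nonneg (x := u n) (y := u k), (by positivity : 0 ≤ δ n),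
      (by positivity : 0 ≤ δ k)]
  obtain ⟨m, hm⟩ := cauchySeq_tendsto_of_complete hcauchy
  have hmI : F m ≤ I := by
    refine le_of_forall_gt_imp_ge_of_dense fun y hy => ?_
    have hlim : Tendsto (fun n => I + δ n ^ 2 / 4) atTop (𝓝 I) := by
      simpa using (hδ.pow 2).div_const 4 |>.const_add I
    exact (hF.isClosed_preimage y).mem_of_tendsto hm <|
      (hlim.eventually_lt_const hy).mono fun n hn => (hu n).le.trans hn.le
  refine ⟨m, fun ω => hmI.trans (hI ω), fun m' hm' => ?_⟩
  have hm'I : F m' ≤ I := le_ciInf hm'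
  have := dist_sq_le_of_midpoint_le hI hmid m' m
  exact dist_le_zero.1 (by nlinarith [dist_nonneg (x := m') (y := m)])

end Minimizer

section Objective

variable {A Ω : Type*} [MeasurableSpace A] [MetricSpace Ω] (P : Measure A) (X : A → Ω)

noncomputable def frechetObjective (z ω : Ω) : ℝ :=
  ∫ a, (dist (X a) ω ^ 2 - dist (X a) z ^ 2) ∂P

variable {P X}

theorem integral_le_mul_add_mul_sub_of_le [IsProbabilityMeasure P] {f g h : A → ℝ}
    (hf : Integrable f P) (hg : Integrable g P) (hh : Integrable h P) {α β c : ℝ}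
    (hle : ∀ a, f a ≤ α * g a + β * h a - c) :
    ∫ a, f a ∂P ≤ α * ∫ a, g a ∂P + β * ∫ a, h a ∂P - c := by
  have hgh : Integrable (fun a => α * g a + β * h a) P := (hg.const_mul α).add (hh.const_mul β)
  calc ∫ a, f a ∂P ≤ ∫ a, (α * g a + β * h a - c) ∂P :=
        integral_mono hf (hgh.sub (integrable_const c)) hle
    _ = α * ∫ a, g a ∂P + β * ∫ a, h a ∂P - c := by
        rw [integral_sub hgh (integrable_const c), integral_add (hg.const_mul α) (hh.const_mul β),
          integral_const_mul, integral_const_mul, integral_const]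
        simp

theorem frechetObjective_eq_add
    (hint : ∀ z ω : Ω, Integrable (fun a => dist (X a) ω ^ 2 - dist (X a) z ^ 2) P)
    (z₀ z ω : Ω) : frechetObjective P X z ω = frechetObjective P X z₀ ω + frechetObjective P X z z₀ := by
  unfold frechetObjective
  rw [← integral_add (hint z₀ ω) (hint z z₀)]
  congr 1 with a
  ring

theorem frechetObjective_le_frechetObjective_iff
    (hint : ∀ z ω : Ω, Integrable (fun a => dist (X a) ω ^ 2 - dist (X a) z ^ 2) P)
    (z₀ z ω ω' : Ω) :
    frechetObjective P X z ω ≤ frechetObjective P X z ω' ↔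
      frechetObjective P X z₀ ω ≤ frechetObjective P X z₀ ω' := by
  rw [frechetObjective_eq_add hint z₀ z ω, frechetObjective_eq_add hint z₀ z ω',
    add_le_add_iff_right]

theorem NPCSpace.frechetObjective_geodesic_le [IsProbabilityMeasure P] (hNPC : NPCSpace Ω)
    (hint : ∀ z ω : Ω, Integrable (fun a => dist (X a) ω ^ 2 - dist (X a) z ^ 2) P)
    {x y : Ω} {γ : ℝ → Ω} (hγ : IsGeodesicFrom x y γ) (z : Ω) {t : ℝ} (ht : t ∈ Icc (0:ℝ) 1) :
    frechetObjective P X z (γ t) ≤ (1 - t) * frechetObjective P X z x +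
      t * frechetObjective P X z y - t * (1 - t) * dist x y ^ 2 :=
  integral_le_mul_add_mul_sub_of_le (hint z (γ t)) (hint z x) (hint z y) fun a => by
    linarith [hNPC.dist_sq_geodesic_le hγ (X a) ht]

theorem NPCSpace.exists_frechetObjective_le [IsProbabilityMeasure P] (hNPC : NPCSpace Ω)
    (hint : ∀ z ω : Ω, Integrable (fun a => dist (X a) ω ^ 2 - dist (X a) z ^ 2) P)
    (z u v : Ω) : ∃ m, frechetObjective P X z m ≤ 1 / 2 * frechetObjective P X z u +
      1 / 2 * frechetObjective P X z v - 1 / 4 * dist u v ^ 2 := by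
  obtain ⟨m, hm⟩ := hNPC u v
  exact ⟨m, integral_le_mul_add_mul_sub_of_le (hint z m) (hint z u) (hint z v) fun a => by
    linarith [hm (X a)]⟩

theorem neg_sq_integral_dist_le_frechetObjective [IsProbabilityMeasure P] {z : Ω}
    (hz : Integrable (fun a => dist (X a) z) P)
    (hint : ∀ ω : Ω, Integrable (fun a => dist (X a) ω ^ 2 - dist (X a) z ^ 2) P) (ω : Ω) :
    -(∫ a, dist (X a) z ∂P) ^ 2 ≤ frechetObjective P X z ω := by
  have hlin : Integrable (fun a => dist z ω ^ 2 - 2 * dist z ω * dist (X a) z) P :=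
    (integrable_const _).sub (hz.const_mul _)
  calc -(∫ a, dist (X a) z ∂P) ^ 2
      ≤ dist z ω ^ 2 - 2 * dist z ω * ∫ a, dist (X a) z ∂P := by
        nlinarith [sq_nonneg (dist z ω - ∫ a, dist (X a) z ∂P)]
    _ = ∫ a, (dist z ω ^ 2 - 2 * dist z ω * dist (X a) z) ∂P := by
        rw [integral_sub (integrable_const _) (hz.const_mul _), integral_const_mul,
          integral_const]
        simp
    _ ≤ frechetObjective P X z ω :=
        integral_mono hlin (hint ω) fun a => dist_sq_sub_mul_le_dist_sq_sub_dist_sq (X a) ω z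

section Measurable

variable [MeasurableSpace Ω] [OpensMeasurableSpace Ω]

theorem aestronglyMeasurable_dist_const (hX : AEMeasurable X P) (ω : Ω) :
    AEStronglyMeasurable (fun a => dist (X a) ω) P :=
  ((continuous_id.dist continuous_const).measurable.comp_aemeasurable hX).aestronglyMeasurable

theorem integrable_dist_of_integrable_dist [IsFiniteMeasure P] (hX : AEMeasurable X P) {z : Ω}
    (hz : Integrable (fun a => dist (X a) z) P) (ω : Ω) :
    Integrable (fun a => dist (X a) ω) P :=
  (hz.add (integrable_const (dist z ω))).mono' (aestronglyMeasurable_dist_const hX ω) <|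
    ae_of_all _ fun a => by
      rw [Real.norm_of_nonneg dist_nonneg]
      exact dist_triangle _ _ _

theorem integrable_dist_sq_sub_dist_sq [IsFiniteMeasure P] (hX : AEMeasurable X P) {z : Ω}
    (hz : Integrable (fun a => dist (X a) z) P) (ω : Ω) :
    Integrable (fun a => dist (X a) ω ^ 2 - dist (X a) z ^ 2) P :=
  (((hz.const_mul 2).add (integrable_const (dist ω z))).const_mul (dist ω z)).mono'
    (((aestronglyMeasurable_dist_const hX ω).pow 2).sub ((aestronglyMeasurable_dist_const hX z).pow 2)) <|
    ae_of_all _ fun a => abs_dist_sq_sub_dist_sq_le (X a) ω z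

theorem continuous_frechetObjective [IsFiniteMeasure P] (hX : AEMeasurable X P) {z : Ω}
    (hz : Integrable (fun a => dist (X a) z) P) : Continuous (frechetObjective P X z) := by
  refine continuous_iff_continuousAt.2 fun ω₀ => ?_
  set R := dist ω₀ z + 1
  refine continuousAt_of_dominated
    (Eventually.of_forall fun ω => (integrable_dist_sq_sub_dist_sq hX hz ω).aestronglyMeasurable)
    (eventually_of_mem (ball_mem_nhds ω₀ one_pos) fun ω hω => ae_of_all _ fun a => ?_)
    (((hz.const_mul 2).add (integrable_const R)).const_mul R)
    (ae_of_all _ fun a => by fun_prop)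
  have hωz : dist ω z ≤ R := (dist_triangle ω ω₀ z).trans (by linarith [mem_ball.1 hω])
  calc ‖dist (X a) ω ^ 2 - dist (X a) z ^ 2‖ ≤ dist ω z * (2 * dist (X a) z + dist ω z) :=
        abs_dist_sq_sub_dist_sq_le (X a) ω z
    _ ≤ R * (2 * dist (X a) z + R) := by gcongr

end Measurable

end Objective

/-- in a Hadamard space, for an `L¹` Borel random variable `X`, for each
`z` the function `ω ↦ E[d(X,ω)² − d(X,z)²]` is well defined (the integrand is integrable),
continuous, uniformly convex (along geodesics, with a positive modulus), and has a unique
minimizer which does not depend on `z`; hence every `L¹` random variable in a Hadamard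
space has a well-defined unique Fréchet mean. -/
theorem l1_frechet_mean_exists_unique
    {Ω : Type*} [MetricSpace Ω] [CompleteSpace Ω] (hNPC : NPCSpace Ω)
    [MeasurableSpace Ω] [BorelSpace Ω]
    {A : Type*} [MeasurableSpace A] (P : Measure A) [IsProbabilityMeasure P]
    (X : A → Ω) (hX : Measurable X)
    (hL1 : ∃ z : Ω, Integrable (fun a => dist (X a) z) P) :
    (∀ z ω : Ω, Integrable (fun a => dist (X a) ω ^ 2 - dist (X a) z ^ 2) P) ∧
    (∀ z : Ω, Continuous fun ω : Ω => ∫ a, (dist (X a) ω ^ 2 - dist (X a) z ^ 2) ∂P) ∧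
    (∃ c > (0:ℝ), ∀ (z x y : Ω) (γ : ℝ → Ω), IsGeodesicFrom x y γ →
      ∀ t ∈ Set.Icc (0:ℝ) 1,
        ∫ a, (dist (X a) (γ t) ^ 2 - dist (X a) z ^ 2) ∂P ≤
          (1 - t) * ∫ a, (dist (X a) x ^ 2 - dist (X a) z ^ 2) ∂P +
          t * ∫ a, (dist (X a) y ^ 2 - dist (X a) z ^ 2) ∂P -
          c * t * (1 - t) * dist x y ^ 2) ∧
    (∃ m : Ω, ∀ z : Ω,
      (∀ ω : Ω, ∫ a, (dist (X a) m ^ 2 - dist (X a) z ^ 2) ∂P ≤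
        ∫ a, (dist (X a) ω ^ 2 - dist (X a) z ^ 2) ∂P) ∧
      (∀ m' : Ω, (∀ ω : Ω, ∫ a, (dist (X a) m' ^ 2 - dist (X a) z ^ 2) ∂P ≤
        ∫ a, (dist (X a) ω ^ 2 - dist (X a) z ^ 2) ∂P) → m' = m)) := by
  obtain ⟨z₀, hz₀⟩ := hL1
  have : Nonempty Ω := ⟨z₀⟩
  have hdist := integrable_dist_of_integrable_dist hX.aemeasurable hz₀
  have hint : ∀ z ω : Ω, Integrable (fun a => dist (X a) ω ^ 2 - dist (X a) z ^ 2) P :=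
    fun z => integrable_dist_sq_sub_dist_sq hX.aemeasurable (hdist z)
  obtain ⟨m, hm, huniq⟩ := existsUnique_forall_le_of_midpoint_le
    (continuous_frechetObjective hX.aemeasurable hz₀).lowerSemicontinuous
    ⟨_, forall_mem_range.2 (neg_sq_integral_dist_le_frechetObjective hz₀ (hint z₀))⟩
    (hNPC.exists_frechetObjective_le hint z₀)
  refine ⟨hint, fun z => continuous_frechetObjective hX.aemeasurable (hdist z),
    ⟨1, one_pos, fun z x y γ hγ t ht => ?_⟩, m, fun z => ⟨fun ω => ?_, fun m' hm' => ?_⟩⟩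
  · rw [one_mul]
    exact hNPC.frechetObjective_geodesic_le hint hγ z ht
  · exact (frechetObjective_le_frechetObjective_iff hint z₀ z m ω).2 (hm ω)
  · exact huniq m' fun ω => (frechetObjective_le_frechetObjective_iff hint z₀ z m' ω).1 (hm' ω)
end

section
/- Let μ ∈ ℝ, φ ∈ [0,1] and σ > 0, and let {η_t}_{t≥1} be i.i.d. real random variables with law N(0, σ^2). For x ∈ ℝ define the iterates X_0(x) = x and X_{t+1}(x) = (1 + η_{t+1})·((1−φ)μ + φ·X_t(x)). Then for all x, x0 ∈ ℝ and t ≥ 0: E[(X_t(x) − X_t(x0))^2] = (φ^2(1 + σ^2))^t · (x − x0)^2. In particular, the geometric-moment contraction condition E[(X_t(x) − X_t(x0))^2] ≤ r^t (x − x0)^2 with r < 1 holds whenever φ < (1 + σ^2)^{−1/2}. -/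
/-! The difference of two GAR(1) trajectories driven by the same noise obeys the linear
recursion `D_{t+1} = φ (1 + η_{t+1}) D_t`, since the mean-reversion term `(1 - φ) μ` cancels.
Hence `D_t² = ∏_{s ≤ t} φ² (1 + η_s)² · D_0²`, and by independence its expectation is the
product of the factors `E[φ² (1 + η_s)²] = φ² (1 + σ²)`. -/

open MeasureTheory ProbabilityTheory
open scoped NNReal

lemma integral_sq_gaussianReal (m : ℝ) (v : ℝ≥0) :
    ∫ x, x ^ 2 ∂gaussianReal m v = m ^ 2 + v := by
  have h := variance_eq_sub (memLp_id_gaussianReal (μ := m) (v := v) 2)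
  simp only [variance_id_gaussianReal, Pi.pow_apply, id_eq, integral_id_gaussianReal] at h
  linarith

lemma aemeasurable_of_map_eq_gaussianReal {Ω : Type*} [MeasurableSpace Ω] {P : Measure Ω}
    {X : Ω → ℝ} {m : ℝ} {v : ℝ≥0} (hX : P.map X = gaussianReal m v) : AEMeasurable X P :=
  .of_map_ne_zero (by rw [hX]; exact IsProbabilityMeasure.ne_zero _)

lemma integral_const_add_sq_of_map_eq_gaussianReal {Ω : Type*} [MeasurableSpace Ω]
    {P : Measure Ω} {X : Ω → ℝ} {m : ℝ} {v : ℝ≥0} (hX : P.map X = gaussianReal m v)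
    (c : ℝ) :
    ∫ ω, (c + X ω) ^ 2 ∂P = (m + c) ^ 2 + v := by
  rw [← integral_map (f := fun y => (c + y) ^ 2) (aemeasurable_of_map_eq_gaussianReal hX)
      (by fun_prop), hX,
    ← integral_map (f := fun y => y ^ 2) (by fun_prop) (by fun_prop),
    gaussianReal_map_const_add, integral_sq_gaussianReal]

lemma ProbabilityTheory.iIndepFun.integral_prod_fin_comp_succ_eq_pow {Ω : Type*}
    [MeasurableSpace Ω] {P : Measure Ω} {X : ℕ → Ω → ℝ} (hX : iIndepFun X P)
    (hXm : ∀ i, AEMeasurable (X i) P) {g : ℝ → ℝ}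
    (hg : Measurable g) {c : ℝ} (hc : ∀ i, ∫ ω, g (X i ω) ∂P = c) (t : ℕ) :
    ∫ ω, ∏ i : Fin t, g (X (i + 1) ω) ∂P = c ^ t := by
  have hXt : iIndepFun (fun i : Fin t => X (i + 1)) P :=
    hX.precomp fun i j hij => Fin.ext (Nat.succ_injective hij)
  rw [hXt.integral_fun_prod_comp (fun i => hXm _) fun _ => hg.aestronglyMeasurable]
  simp [hc]

lemma sub_eq_prod_mul_sub_of_affine {X : ℕ → ℝ → ℝ} (c b : ℕ → ℝ)
    (hX : ∀ t x, X (t + 1) x = c (t + 1) * X t x + b (t + 1)) (t : ℕ) (x y : ℝ) :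
    X t x - X t y = (∏ i : Fin t, c (i + 1)) * (X 0 x - X 0 y) := by
  induction t with
  | zero => simp
  | succ t ih =>
    rw [hX, hX, Fin.prod_univ_castSucc]
    simp only [Fin.val_castSucc, Fin.val_last]
    linear_combination c (t + 1) * ih

lemma sq_mul_lt_one_of_lt_rpow_neg_half {φ c : ℝ} (hφ : 0 ≤ φ) (hc : 0 < c)
    (h : φ < c ^ (-(1 / 2) : ℝ)) : φ ^ 2 * c < 1 := by
  have hsqrt : 0 < √c := Real.sqrt_pos.2 hc
  rw [Real.rpow_neg hc.le, ← Real.sqrt_eq_rpow, ← one_div, lt_div_iff₀ hsqrt] at h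
  calc φ ^ 2 * c = (φ * √c) ^ 2 := by rw [mul_pow, Real.sq_sqrt hc.le]
    _ < 1 := pow_lt_one₀ (by positivity) h two_ne_zero

theorem real_gar1_contraction_general
    (μ φ σ : ℝ) (hφ : φ ∈ Set.Icc (0:ℝ) 1)
    {A : Type*} [MeasurableSpace A] (P : Measure A) [IsProbabilityMeasure P]
    (η : ℕ → A → ℝ)
    (hηindep : iIndepFun η P)
    (hηlaw : ∀ t, Measure.map (η t) P = gaussianReal 0 (Real.toNNReal (σ ^ 2)))
    (Xit : ℕ → A → ℝ → ℝ)
    (hXit0 : ∀ a x, Xit 0 a x = x)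
    (hXitS : ∀ t a x, Xit (t + 1) a x = (1 + η (t + 1) a) * ((1 - φ) * μ + φ * Xit t a x)) :
    (∀ (x x0 : ℝ) (t : ℕ),
      ∫ a, (Xit t a x - Xit t a x0) ^ 2 ∂P = (φ ^ 2 * (1 + σ ^ 2)) ^ t * (x - x0) ^ 2) ∧
    (φ < (1 + σ ^ 2) ^ (-(1/2) : ℝ) → φ ^ 2 * (1 + σ ^ 2) < 1) := by
  refine ⟨fun x x0 t => ?_, sq_mul_lt_one_of_lt_rpow_neg_half hφ.1 (by positivity)⟩
  have hsq : ∀ a, (Xit t a x - Xit t a x0) ^ 2 =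
      (∏ i : Fin t, (φ * (1 + η (i + 1) a)) ^ 2) * (x - x0) ^ 2 := fun a => by
    rw [sub_eq_prod_mul_sub_of_affine (X := fun t x => Xit t a x) (fun s => φ * (1 + η s a))
      (fun s => (1 + η s a) * ((1 - φ) * μ)) (fun t x => by rw [hXitS]; ring),
      hXit0, hXit0, mul_pow, Finset.prod_pow]
  have hfactor : ∀ s, ∫ a, (φ * (1 + η s a)) ^ 2 ∂P = φ ^ 2 * (1 + σ ^ 2) := fun s => by
    simp_rw [mul_pow]
    rw [integral_const_mul, integral_const_add_sq_of_map_eq_gaussianReal (hηlaw s),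
      Real.coe_toNNReal _ (sq_nonneg σ), zero_add, one_pow]
  simp_rw [hsq]
  rw [integral_mul_const, hηindep.integral_prod_fin_comp_succ_eq_pow
    (fun s => aemeasurable_of_map_eq_gaussianReal (hηlaw s))
    (g := fun y => (φ * (1 + y)) ^ 2) (by fun_prop) hfactor]

/-- for the real-line GAR(1) recursion
`X_{t+1}(x) = (1 + η_{t+1})((1−φ)μ + φ X_t(x))` with i.i.d. `η_t ∼ N(0,σ²)`,
`E[(X_t(x) − X_t(x0))²] = (φ²(1+σ²))ᵗ (x − x0)²` for all `x, x0, t`; in particular the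
geometric-moment contraction condition with rate `r = φ²(1+σ²) < 1` holds whenever
`φ < (1+σ²)^{−1/2}`. -/
theorem real_gar1_contraction
    (μ φ σ : ℝ) (hφ : φ ∈ Set.Icc (0:ℝ) 1) (hσ : 0 < σ)
    {A : Type*} [MeasurableSpace A] (P : Measure A) [IsProbabilityMeasure P]
    (η : ℕ → A → ℝ) (hηmeas : ∀ t, Measurable (η t))
    (hηindep : iIndepFun η P)
    (hηlaw : ∀ t, Measure.map (η t) P = gaussianReal 0 (Real.toNNReal (σ ^ 2)))
    (Xit : ℕ → A → ℝ → ℝ)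
    (hXit0 : ∀ a x, Xit 0 a x = x)
    (hXitS : ∀ t a x, Xit (t + 1) a x = (1 + η (t + 1) a) * ((1 - φ) * μ + φ * Xit t a x)) :
    (∀ (x x0 : ℝ) (t : ℕ),
      ∫ a, (Xit t a x - Xit t a x0) ^ 2 ∂P = (φ ^ 2 * (1 + σ ^ 2)) ^ t * (x - x0) ^ 2) ∧
    (φ < (1 + σ ^ 2) ^ (-(1/2) : ℝ) → φ ^ 2 * (1 + σ ^ 2) < 1) :=
  real_gar1_contraction_general μ φ σ hφ P η hηindep hηlaw Xit hXit0 hXitS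
end
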